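/- Distance composition through a separator: let G be a graph with a separator B, splitting G into H and G_B with V(H) ∩ V(G_B) = B and no edges between V(H)∖B and V(G_B)∖B. Let G_B' be another graph with the same boundary B such that for all u, v ∈ B, d_{G_B'}(u,v) ≥ d_{G_B}(u,v). Let G' = H ⊕ G_B'. Then for all vertices x, y ∈ V(H), d_{G'}(x,y) ≥ d_G(x,y). -/

import Mathlib

/-!
Follow a walk of `G'` backwards from its endpoint `y ∈ VH`. Every maximal excursion of the walk
into the replaced side `VB'` starts and ends at boundary vertices `b₁, b₂ ∈ B`, and its length is
at least the `G_B'`-distance of `b₁, b₂`, hence at least their `G_B`-distance, hence at least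
`d_G(b₁, b₂)`; edges inside `VH` are edges of `G`. So the walk is no shorter than `d_G(x, y)`.
The induction carries, for a vertex `x` in the middle of an excursion, the exit point `b` of
that excursion.
-/

namespace SimpleGraph

variable {V W : Type*} {G : SimpleGraph V} {G' : SimpleGraph W}

lemma le_edist_of_forall_walk {u v : V} {c : ℕ∞} (h : ∀ p : G.Walk u v, c ≤ p.length) :
    c ≤ G.edist u v :=
  le_sInf (Set.forall_mem_range.2 h)

lemma Hom.edist_le (f : G →g G') (u v : V) : G'.edist (f u) (f v) ≤ G.edist u v :=
  le_edist_of_forall_walk fun p => by simpa using G'.edist_le (p.map f)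

lemma edist_le_edist_induce (s : Set V) (u v : s) : G.edist u v ≤ (G.induce s).edist u v :=
  (Embedding.induce s).toHom.edist_le u v

lemma Adj.edist_le_one_add {u v : V} (h : G.Adj u v) (w : V) :
    G.edist u w ≤ 1 + G.edist v w := by
  simpa [edist_eq_one_iff_adj.mpr h] using G.edist_triangle (u := u) (v := v) (w := w)

end SimpleGraph

open SimpleGraph

section Separator

variable {U : Type*} {G G' : SimpleGraph U} {VH VB' : Set U}

lemma edist_le_length_of_walk_through_separator
    (hside : ∀ x y : U, G'.Adj x y → (x ∈ VH ∧ y ∈ VH) ∨ (x ∈ VB' ∧ y ∈ VB'))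
    (hagree : ∀ x y : U, x ∈ VH → y ∈ VH → G'.Adj x y → G.Adj x y)
    (hbdry : ∀ u v : U, ∀ (hu : u ∈ VB') (hv : v ∈ VB'), u ∈ VH → v ∈ VH →
      G.edist u v ≤ (G'.induce VB').edist ⟨u, hu⟩ ⟨v, hv⟩)
    {x y : U} (hy : y ∈ VH) (p : G'.Walk x y) :
    (x ∈ VH → G.edist x y ≤ p.length) ∧
    (∀ hx : x ∈ VB', ∃ b, ∃ hb : b ∈ VB', b ∈ VH ∧
      (G'.induce VB').edist ⟨x, hx⟩ ⟨b, hb⟩ + G.edist b y ≤ p.length) := by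
  induction p with
  | nil => exact ⟨fun _ => by simp, fun hx => ⟨_, hx, hy, by simp⟩⟩
  | @cons x z y hxz p ih =>
    have hlen : ((p.cons hxz).length : ℕ∞) = 1 + p.length := by
      rw [Walk.length_cons, Nat.cast_succ, add_comm]
    have hexcursion : ∀ (hx : x ∈ VB') (hz : z ∈ VB'), ∃ b, ∃ hb : b ∈ VB', b ∈ VH ∧
        (G'.induce VB').edist ⟨x, hx⟩ ⟨b, hb⟩ + G.edist b y ≤ 1 + p.length := by
      intro hx hz
      obtain ⟨b, hb, hbH, hpb⟩ := (ih hy).2 hz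
      refine ⟨b, hb, hbH, ?_⟩
      calc (G'.induce VB').edist ⟨x, hx⟩ ⟨b, hb⟩ + G.edist b y
          ≤ 1 + (G'.induce VB').edist ⟨z, hz⟩ ⟨b, hb⟩ + G.edist b y := by
            gcongr
            exact Adj.edist_le_one_add (G := G'.induce VB') (u := ⟨x, hx⟩) (v := ⟨z, hz⟩) hxz _
        _ ≤ 1 + p.length := by rw [add_assoc]; gcongr
    have hfromH : x ∈ VH → G.edist x y ≤ 1 + p.length := by
      intro hxH
      rcases hside x z hxz with ⟨-, hzH⟩ | ⟨hx, hz⟩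
      · calc G.edist x y ≤ 1 + G.edist z y := (hagree x z hxH hzH hxz).edist_le_one_add y
          _ ≤ 1 + p.length := by gcongr; exact (ih hy).1 hzH
      · obtain ⟨b, hb, hbH, hpb⟩ := hexcursion hx hz
        calc G.edist x y ≤ G.edist x b + G.edist b y := G.edist_triangle
          _ ≤ (G'.induce VB').edist ⟨x, hx⟩ ⟨b, hb⟩ + G.edist b y := by
            gcongr; exact hbdry x b hx hb hxH hbH
          _ ≤ 1 + p.length := hpb
    rw [hlen]
    refine ⟨hfromH, fun hx => ?_⟩
    by_cases hxH : x ∈ VH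
    · exact ⟨x, hx, hxH, by simpa using hfromH hxH⟩
    · rcases hside x z hxz with ⟨hxH', -⟩ | ⟨-, hz⟩
      · exact absurd hxH' hxH
      · exact hexcursion hx hz

end Separator

theorem statement11_general {U : Type} (G G' : SimpleGraph U)
    (B VH VB VB' : Set U)
    (hB1 : VH ∩ VB = B) (hB2 : VH ∩ VB' = B)
    (hG'side : ∀ x y : U, G'.Adj x y → (x ∈ VH ∧ y ∈ VH) ∨ (x ∈ VB' ∧ y ∈ VB'))
    (hagree : ∀ x y : U, x ∈ VH → y ∈ VH → (G.Adj x y ↔ G'.Adj x y))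
    (hdist : ∀ u v : U, ∀ (hu : u ∈ VB) (hv : v ∈ VB) (hu' : u ∈ VB') (hv' : v ∈ VB'),
      u ∈ B → v ∈ B →
        (G.induce VB).edist ⟨u, hu⟩ ⟨v, hv⟩ ≤ (G'.induce VB').edist ⟨u, hu'⟩ ⟨v, hv'⟩) :
    ∀ x y : U, x ∈ VH → y ∈ VH → G.edist x y ≤ G'.edist x y := by
  intro x y hx hy
  have hbdry : ∀ u v : U, ∀ (hu : u ∈ VB') (hv : v ∈ VB'), u ∈ VH → v ∈ VH →
      G.edist u v ≤ (G'.induce VB').edist ⟨u, hu⟩ ⟨v, hv⟩ := by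
    intro u v hu' hv' huH hvH
    have huB : u ∈ B := hB2 ▸ ⟨huH, hu'⟩
    have hvB : v ∈ B := hB2 ▸ ⟨hvH, hv'⟩
    have hu : u ∈ VB := (hB1 ▸ huB : u ∈ VH ∩ VB).2
    have hv : v ∈ VB := (hB1 ▸ hvB : v ∈ VH ∩ VB).2
    exact (edist_le_edist_induce VB ⟨u, hu⟩ ⟨v, hv⟩).trans
      (hdist u v hu hv hu' hv' huB hvB)
  exact le_edist_of_forall_walk fun p => (edist_le_length_of_walk_through_separator hG'side
    (fun a b ha hb => (hagree a b ha hb).mpr) hbdry hy p).1 hx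

/-- distance composition through a separator. `G = H ⊕ G_B` is split by the
separator `B` into sides `VH` and `VB` (`VH ∩ VB = B`, every edge inside one side), and
`G' = H ⊕ G_B'` is obtained by replacing `G_B` by another graph `G_B'` with the same
boundary `B` (sides `VH` and `VB'`, `G` and `G'` agree on `VH`). If for all `u, v ∈ B` the
distance between `u` and `v` in `G_B'` is at least their distance in `G_B`, then for all
vertices `x, y ∈ VH`, `d_{G'}(x,y) ≥ d_G(x,y)`. -/
theorem statement11 {U : Type} (G G' : SimpleGraph U)
    (B VH VB VB' : Set U)
    (hB1 : VH ∩ VB = B) (hB2 : VH ∩ VB' = B)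
    (hGside : ∀ x y : U, G.Adj x y → (x ∈ VH ∧ y ∈ VH) ∨ (x ∈ VB ∧ y ∈ VB))
    (hG'side : ∀ x y : U, G'.Adj x y → (x ∈ VH ∧ y ∈ VH) ∨ (x ∈ VB' ∧ y ∈ VB'))
    (hagree : ∀ x y : U, x ∈ VH → y ∈ VH → (G.Adj x y ↔ G'.Adj x y))
    (hdist : ∀ u v : U, ∀ (hu : u ∈ VB) (hv : v ∈ VB) (hu' : u ∈ VB') (hv' : v ∈ VB'),
      u ∈ B → v ∈ B →
        (G.induce VB).edist ⟨u, hu⟩ ⟨v, hv⟩ ≤ (G'.induce VB').edist ⟨u, hu'⟩ ⟨v, hv'⟩) :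
    ∀ x y : U, x ∈ VH → y ∈ VH → G.edist x y ≤ G'.edist x y :=
  statement11_general G G' B VH VB VB' hB1 hB2 hG'side hagree hdist
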